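/- Armijo backtracking terminates: if j : ℝ^N → ℝ is continuously differentiable, u ∈ [0,1]^N, g = ∇j(u) ≠ 0, and u is not stationary (i.e. P_U(u − αg) ≠ u for small α > 0), then there exists ᾱ > 0 such that for all α ∈ (0, ᾱ], j(P_U(u − αg)) ≤ j(u) − (σ/α)‖P_U(u − αg) − u‖² for fixed σ ∈ (0, 1/2), where P_U is the projection onto [0,1]^N. -/

import Mathlib

/-!
For all small `α > 0` the clamped step `P (u - α • g)` coincides with the straight step
`u - α • d`, where `d` is the reduced gradient: `g` with the components zeroed along which `u`
already lies on a face of the box and `-g` points out of it. On the line `α ↦ u - α • d` the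
function `j` has slope `-⟪g, d⟫ = -‖d‖²` at `0`, which is strictly below `-σ ‖d‖²` when `d ≠ 0`;
this gives the sufficient decrease `j (u - α • d) ≤ j u - σ α ‖d‖²`, and
`(σ / α) ‖α • d‖² = σ α ‖d‖²`. When `d = 0` both sides equal `j u`.
-/

open Set Filter Topology
open scoped RealInnerProductSpace

noncomputable def reducedGradCoord (a c : ℝ) : ℝ :=
  if (a = 0 ∧ 0 < c) ∨ (a = 1 ∧ c < 0) then 0 else c

theorem eventually_nonneg_sub_mul {a c : ℝ} (ha : 0 ≤ a) (h : 0 < a ∨ c ≤ 0) :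
    ∀ᶠ t in 𝓝[>] (0 : ℝ), 0 ≤ a - t * c := by
  rcases h with ha' | hc
  · have hlim : Tendsto (fun t : ℝ => a - t * c) (𝓝 0) (𝓝 a) := by
      exact Continuous.tendsto' (by fun_prop) 0 a (by simp)
    exact ((hlim.eventually (lt_mem_nhds ha')).filter_mono nhdsWithin_le_nhds).mono
      fun _ h => h.le
  · filter_upwards [self_mem_nhdsWithin] with t (ht : 0 < t)
    nlinarith

theorem eventually_clamp_sub_mul {a : ℝ} (ha : a ∈ Icc (0 : ℝ) 1) (c : ℝ) :
    ∀ᶠ t in 𝓝[>] (0 : ℝ), min (max (a - t * c) 0) 1 = a - t * reducedGradCoord a c := by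
  unfold reducedGradCoord
  split_ifs with hactive
  · filter_upwards [self_mem_nhdsWithin] with t (ht : 0 < t)
    rcases hactive with ⟨rfl, hc⟩ | ⟨rfl, hc⟩
    · rw [max_eq_right (by nlinarith), min_eq_left zero_le_one]; ring
    · rw [max_eq_left (by nlinarith), min_eq_right (by nlinarith)]; ring
  · push Not at hactive
    have hlow : 0 < a ∨ c ≤ 0 := ha.1.lt_or_eq.imp_right fun h => hactive.1 h.symm
    have hup : 0 < 1 - a ∨ -c ≤ 0 :=
      (sub_nonneg.2 ha.2).lt_or_eq.imp_right fun h => neg_nonpos.2 (hactive.2 (by linarith))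
    filter_upwards [eventually_nonneg_sub_mul ha.1 hlow,
      eventually_nonneg_sub_mul (sub_nonneg.2 ha.2) hup] with t h0 h1
    rw [max_eq_left h0, min_eq_left (by linarith)]

section ReducedGradient

variable {ι : Type*} [Fintype ι]

/-- `-reducedGradient u g` is the projection of `-g` onto the tangent cone of the box
`[0, 1]^ι` at `u`. -/
noncomputable def reducedGradient (u g : EuclideanSpace ℝ ι) : EuclideanSpace ℝ ι :=
  WithLp.toLp 2 fun i => reducedGradCoord (u i) (g i)

theorem eventually_clamp_sub_smul {P : EuclideanSpace ℝ ι → EuclideanSpace ℝ ι}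
    (hP : ∀ w i, P w i = min (max (w i) 0) 1) {u : EuclideanSpace ℝ ι}
    (hu : ∀ i, u i ∈ Icc (0 : ℝ) 1) (g : EuclideanSpace ℝ ι) :
    ∀ᶠ t in 𝓝[>] (0 : ℝ), P (u - t • g) = u - t • reducedGradient u g := by
  filter_upwards [eventually_all.2 fun i => eventually_clamp_sub_mul (hu i) (g i)] with t ht
  ext i
  simpa [hP, reducedGradient] using ht i

theorem inner_reducedGradient (u g : EuclideanSpace ℝ ι) :
    ⟪g, reducedGradient u g⟫ = ‖reducedGradient u g‖ ^ 2 := by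
  rw [← real_inner_self_eq_norm_sq]
  simp only [PiLp.inner_apply, RCLike.inner_apply, conj_trivial]
  refine Finset.sum_congr rfl fun i _ => ?_
  simp only [reducedGradient, reducedGradCoord]
  split_ifs <;> simp

end ReducedGradient

theorem eventually_armijo {F : Type*} [NormedAddCommGroup F] [InnerProductSpace ℝ F]
    [CompleteSpace F] {f : F → ℝ} {x g d : F} (hf : HasGradientAt f g x)
    (hd : 0 < ⟪g, d⟫) {σ : ℝ} (hσ : σ < 1) :
    ∀ᶠ t in 𝓝[>] (0 : ℝ), f (x - t • d) ≤ f x - σ * t * ⟪g, d⟫ := by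
  have hline : HasDerivAt (fun t : ℝ => x - t • d) (-d) 0 := by
    simpa using ((hasDerivAt_id (0 : ℝ)).smul_const d).const_sub x
  have hφ : HasDerivAt (fun t : ℝ => f (x - t • d)) (-⟪g, d⟫) 0 := by
    have hfx : HasFDerivAt f (InnerProductSpace.toDual ℝ F g) (x - (0 : ℝ) • d) := by
      simpa using hasGradientAt_iff_hasFDerivAt.1 hf
    have hcomp := hfx.comp_hasDerivAt (0 : ℝ) hline
    rwa [InnerProductSpace.toDual_apply_apply, inner_neg_right] at hcomp
  filter_upwards [hφ.hasDerivWithinAt.limsup_slope_le' (lt_irrefl (0 : ℝ))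
      (show -⟪g, d⟫ < -(σ * ⟪g, d⟫) by nlinarith), self_mem_nhdsWithin]
    with t hslope (ht : 0 < t)
  rw [slope_def_field, zero_smul, sub_zero, sub_zero, div_lt_iff₀ ht] at hslope
  linarith

theorem stmt19_general (N : ℕ) (j : EuclideanSpace ℝ (Fin N) → ℝ) (hj : ContDiff ℝ 1 j)
    (P : EuclideanSpace ℝ (Fin N) → EuclideanSpace ℝ (Fin N))
    (hP : ∀ w : EuclideanSpace ℝ (Fin N), ∀ i, P w i = min (max (w i) 0) 1)
    (u : EuclideanSpace ℝ (Fin N)) (hu : ∀ i, u i ∈ Set.Icc (0 : ℝ) 1)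
    (σ : ℝ) (hσ : σ ∈ Set.Ioo (0 : ℝ) (1 / 2)) :
    ∃ ᾱ > (0 : ℝ), ∀ α ∈ Set.Ioc (0 : ℝ) ᾱ,
      j (P (u - α • gradient j u)) ≤
        j u - (σ / α) * ‖P (u - α • gradient j u) - u‖ ^ 2 := by
  set d := reducedGradient u (gradient j u)
  have hdecrease : ∀ᶠ α in 𝓝[>] (0 : ℝ), j (u - α • d) ≤ j u - σ * α * ‖d‖ ^ 2 := by
    rcases eq_or_ne d 0 with hd | hd
    · simp [hd]
    · rw [← inner_reducedGradient]
      refine eventually_armijo (hj.differentiable one_ne_zero u).hasGradientAt ?_ (by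
        linarith [hσ.2])
      rw [inner_reducedGradient]
      exact pow_pos (norm_pos_iff.2 hd) 2
  obtain ⟨ᾱ, hᾱ, hsub⟩ := mem_nhdsGT_iff_exists_Ioc_subset.1
    ((eventually_clamp_sub_smul hP hu (gradient j u)).and hdecrease)
  refine ⟨ᾱ, hᾱ, fun α hα => ?_⟩
  obtain ⟨hstep, hj_le⟩ := hsub hα
  have hα0 : α ≠ 0 := hα.1.ne'
  calc j (P (u - α • gradient j u)) ≤ j u - σ * α * ‖d‖ ^ 2 := hstep ▸ hj_le
    _ = j u - (σ / α) * ‖α • d‖ ^ 2 := by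
      rw [norm_smul, Real.norm_eq_abs, abs_of_pos hα.1]; field_simp
    _ = j u - (σ / α) * ‖P (u - α • gradient j u) - u‖ ^ 2 := by
      rw [hstep, sub_sub_cancel_left, norm_neg]

/-- Armijo backtracking terminates: if j is C¹, u ∈ [0,1]^N, g = ∇j(u) ≠ 0, u is not
stationary (the projected gradient step moves u for all small α > 0), and σ ∈ (0,1/2),
then there is ᾱ > 0 such that for all α ∈ (0, ᾱ] the sufficient decrease condition
j(P(u − αg)) ≤ j(u) − (σ/α)‖P(u − αg) − u‖² holds, where P is the componentwise
clamping projection onto [0,1]^N. -/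
theorem stmt19 (N : ℕ) (j : EuclideanSpace ℝ (Fin N) → ℝ) (hj : ContDiff ℝ 1 j)
    (P : EuclideanSpace ℝ (Fin N) → EuclideanSpace ℝ (Fin N))
    (hP : ∀ w : EuclideanSpace ℝ (Fin N), ∀ i, P w i = min (max (w i) 0) 1)
    (u : EuclideanSpace ℝ (Fin N)) (hu : ∀ i, u i ∈ Set.Icc (0 : ℝ) 1)
    (hg : gradient j u ≠ 0)
    (hnonstat : ∃ α₀ > (0 : ℝ), ∀ α ∈ Set.Ioc (0 : ℝ) α₀, P (u - α • gradient j u) ≠ u)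
    (σ : ℝ) (hσ : σ ∈ Set.Ioo (0 : ℝ) (1 / 2)) :
    ∃ ᾱ > (0 : ℝ), ∀ α ∈ Set.Ioc (0 : ℝ) ᾱ,
      j (P (u - α • gradient j u)) ≤
        j u - (σ / α) * ‖P (u - α • gradient j u) - u‖ ^ 2 :=
  stmt19_general N j hj P hP u hu σ hσ
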